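/- arXiv:2110.02589 — 2 statements merged into one kernel-verified Lean document; each statement's English description precedes it below -/
import Mathlib

section
/- Every ball Banach function space Y on a space of homogeneous type coincides with its second associate space Y″: a measurable function f belongs to Y if and only if it belongs to Y″, and for such f, ‖f‖_Y = ‖f‖_{Y″}. -/
open MeasureTheory Set
open scoped ENNReal NNReal

/-- The ball in a quasi-metric space. -/
def qball {X : Type*} (ρ : X → X → ℝ) (c : X) (r : ℝ) : Set X := {y | ρ c y < r}

/-- The defining properties of a ball Banach function space on `(X, ρ, μ)`,
expressed for a norm functional `N` on (the moduli of) measurable functions. -/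
structure IsBallBanachFunctionSpace {X : Type*} [MeasurableSpace X] (μ : Measure X)
    (ρ : X → X → ℝ) (N : (X → ℝ≥0∞) → ℝ≥0∞) : Prop where
  zero_iff : ∀ f : X → ℝ≥0∞, Measurable f → (N f = 0 ↔ f =ᵐ[μ] 0)
  mono : ∀ f g : X → ℝ≥0∞, Measurable f → Measurable g →
    (∀ᵐ x ∂μ, g x ≤ f x) → N g ≤ N f
  sup_lim : ∀ (f : ℕ → X → ℝ≥0∞) (g : X → ℝ≥0∞), (∀ n, Measurable (f n)) →
    Measurable g → (∀ n, ∀ᵐ x ∂μ, f n x ≤ f (n + 1) x) →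
    (∀ᵐ x ∂μ, (⨆ n, f n x) = g x) → (⨆ n, N (f n)) = N g
  triangle : ∀ f g : X → ℝ≥0∞, Measurable f → Measurable g →
    N (fun x => f x + g x) ≤ N f + N g
  smul : ∀ (c : ℝ≥0) (f : X → ℝ≥0∞), Measurable f →
    N (fun x => (c : ℝ≥0∞) * f x) = c * N f
  ball_lt : ∀ (c : X) (r : ℝ), 0 < r →
    N (Set.indicator (qball ρ c r) fun _ => (1 : ℝ≥0∞)) < ∞
  local_int : ∀ (c : X) (r : ℝ), 0 < r → ∃ C : ℝ≥0∞, C < ∞ ∧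
    ∀ f : X → ℝ≥0∞, Measurable f → (∫⁻ x in qball ρ c r, f x ∂μ) ≤ C * N f

/-- The associate (Köthe dual) norm `‖g‖_{Y'} = sup {‖fg‖_{L¹} : ‖f‖_Y ≤ 1}`. -/
noncomputable def assocNorm {X : Type*} [MeasurableSpace X] (μ : Measure X)
    (N : (X → ℝ≥0∞) → ℝ≥0∞) (g : X → ℝ≥0∞) : ℝ≥0∞ :=
  ⨆ (f : X → ℝ≥0∞) (_ : Measurable f) (_ : N f ≤ 1), ∫⁻ x, f x * g x ∂μ

/-!
The inequality `‖f‖_{Y''} ≤ ‖f‖_Y` is Hölder's inequality `∫ f g ≤ ‖f‖_Y ‖g‖_{Y'}`.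

For the converse, σ-finiteness (balls have finite measure), homogeneity and the Fatou property
reduce it to showing `‖f‖_{Y''} > 1` for `f ∈ L²` with `‖f‖_Y > 1`. The elements of the unit
ball of `Y` lying in `L²` form a convex set, and the Fatou property (through an a.e. convergent
subsequence) keeps `f` out of its `L²`-closure. Hahn–Banach and the Riesz representation then
give `g ∈ L²` with `⟪g, h⟫ < 1` on that set and `⟪g, f⟫ > 1`. Testing `g` against the
truncations `min h (M g⁺)`, which lie in `L²`, shows `‖g⁺‖_{Y'} ≤ 1`, while
`∫ f g⁺ ≥ ⟪g, f⟫ > 1`. Separating in `L²` rather than in `L¹` is what makes the Riesz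
representation available.
-/

open Filter Topology

lemma ENNReal.iSup_min_natCast_mul (a : ℝ≥0∞) {b : ℝ≥0∞} (hb : b ≠ 0) :
    ⨆ n : ℕ, min a (n * b) = a := by
  rw [← inf_iSup_eq, ← ENNReal.iSup_mul, ENNReal.iSup_natCast, ENNReal.top_mul hb, inf_top_eq]

lemma ENNReal.iSup_min_natCast_mul_mul (a b : ℝ≥0∞) : ⨆ n : ℕ, min a (n * b) * b = a * b := by
  rcases eq_or_ne b 0 with rfl | hb
  · simp
  · rw [← ENNReal.iSup_mul, ENNReal.iSup_min_natCast_mul a hb]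

lemma MeasureTheory.lintegral_coe_mul_ofReal {α : Type*} [MeasurableSpace α] {μ : Measure α}
    {g : α → ℝ} {q : α → ℝ≥0} (hgq_int : Integrable (fun x => g x * q x) μ)
    (hgq : 0 ≤ᵐ[μ] fun x => g x * q x) :
    ∫⁻ x, q x * ENNReal.ofReal (g x) ∂μ = ENNReal.ofReal (∫ x, g x * q x ∂μ) := by
  rw [ofReal_integral_eq_lintegral_ofReal hgq_int hgq]
  refine lintegral_congr fun x => ?_
  rw [ENNReal.ofReal_mul' (NNReal.coe_nonneg _), ENNReal.ofReal_coe_nnreal, mul_comm]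

lemma MeasureTheory.MemLp.coe_of_le_mul_toNNReal {α : Type*} [MeasurableSpace α]
    {μ : Measure α} {p : ℝ≥0∞} {g : α → ℝ} (hg : MemLp g p μ) {q : α → ℝ≥0} (hq : Measurable q)
    {c : ℝ≥0} (hqg : ∀ x, q x ≤ c * (g x).toNNReal) : MemLp (fun x => (q x : ℝ)) p μ := by
  refine (hg.const_mul c).mono hq.coe_nnreal_real.aestronglyMeasurable (ae_of_all _ fun x => ?_)
  have hqx := NNReal.coe_le_coe.2 (hqg x)
  rw [NNReal.coe_mul, Real.coe_toNNReal'] at hqx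
  rw [Real.norm_of_nonneg (NNReal.coe_nonneg _), norm_mul, NNReal.norm_eq, Real.norm_eq_abs]
  exact hqx.trans (by gcongr; exact max_le (le_abs_self _) (abs_nonneg _))

lemma MeasureTheory.ofReal_integral_le_lintegral_ofReal {α : Type*} [MeasurableSpace α]
    {μ : Measure α} (f : α → ℝ) :
    ENNReal.ofReal (∫ x, f x ∂μ) ≤ ∫⁻ x, ENNReal.ofReal (f x) ∂μ := by
  by_cases hf : Integrable f μ
  · rw [integral_eq_lintegral_pos_part_sub_lintegral_neg_part hf]
    exact (ENNReal.ofReal_le_ofReal (sub_le_self _ ENNReal.toReal_nonneg)).trans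
      ENNReal.ofReal_toReal_le
  · simp [integral_undef hf]

lemma exists_monotone_memLp_two_iSup_eq {X : Type*} [MeasurableSpace X] {μ : Measure X}
    [SigmaFinite μ] {f : X → ℝ≥0∞} (hf : Measurable f) :
    ∃ F : ℕ → X → ℝ≥0, (∀ n, Measurable (F n)) ∧ (∀ n, MemLp (fun x => (F n x : ℝ)) 2 μ) ∧
      Monotone F ∧ ∀ x, ⨆ n, (F n x : ℝ≥0∞) = f x := by
  set F : ℕ → X → ℝ≥0 := fun n => (spanningSets μ n).indicator fun x => (min (f x) n).toNNReal
  have hF_coe : ∀ n x, (F n x : ℝ≥0∞) = (spanningSets μ n).indicator (fun x => min (f x) n) x :=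
    fun n x => by
      simp only [F, ENNReal.coe_indicator]
      congr! with x
      exact ENNReal.coe_toNNReal (ne_top_of_le_ne_top (by finiteness) (min_le_right _ _))
  have hF_mono : Monotone F := by
    intro m n hmn x
    rw [← ENNReal.coe_le_coe, hF_coe, hF_coe]
    by_cases hx : x ∈ spanningSets μ m
    · rw [indicator_of_mem hx, indicator_of_mem (monotone_spanningSets μ hmn hx)]
      gcongr
    · rw [indicator_of_notMem hx]
      exact zero_le
  have hFm : ∀ n, Measurable (F n) := fun n =>
    (hf.min measurable_const).ennreal_toNNReal.indicator (measurableSet_spanningSets μ n)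
  refine ⟨F, hFm, fun n => ?_, hF_mono, fun x => ?_⟩
  · refine (memLp_indicator_const 2 (measurableSet_spanningSets μ n) (n : ℝ)
      (Or.inr (measure_spanningSets_lt_top μ n).ne)).mono
      (hFm n).coe_nnreal_real.aestronglyMeasurable
      (ae_of_all _ fun x => ?_)
    by_cases hx : x ∈ spanningSets μ n
    · simp only [F, indicator_of_mem hx]
      rw [Real.norm_of_nonneg (NNReal.coe_nonneg _), Real.norm_natCast, ← NNReal.coe_natCast,
        NNReal.coe_le_coe, ← ENNReal.toNNReal_natCast]
      exact ENNReal.toNNReal_mono (by finiteness) (min_le_right _ _)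
    · simp [F, hx]
  · refine le_antisymm (iSup_le fun n => ?_) ?_
    · rw [hF_coe]
      exact indicator_apply_le' (fun _ => min_le_left _ _) (fun _ => zero_le)
    · conv_lhs => rw [← ENNReal.iSup_min_natCast_mul (f x) one_ne_zero]
      refine iSup_le fun n => le_iSup_of_le (max n (spanningSetsIndex μ x)) ?_
      have hx : x ∈ spanningSets μ (max n (spanningSetsIndex μ x)) :=
        monotone_spanningSets μ (le_max_right _ _) (mem_spanningSetsIndex μ x)
      rw [hF_coe, indicator_of_mem hx, mul_one]
      gcongr
      exact le_max_left _ _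

lemma exists_inner_lt_one_lt_inner {E : Type*} [NormedAddCommGroup E] [InnerProductSpace ℝ E]
    [CompleteSpace E] {s : Set E} (hconv : Convex ℝ s) (hclosed : IsClosed s) (h0 : 0 ∈ s)
    {x : E} (hx : x ∉ s) :
    ∃ y : E, (∀ a ∈ s, inner ℝ y a < 1) ∧ 1 < inner ℝ y x := by
  obtain ⟨φ, r, hφs, hφx⟩ := geometric_hahn_banach_closed_point hconv hclosed hx
  have hr : 0 < r := by simpa using hφs 0 h0
  refine ⟨(InnerProductSpace.toDual ℝ E).symm (r⁻¹ • φ), fun a ha => ?_, ?_⟩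
  · rw [InnerProductSpace.toDual_symm_apply, smul_apply, smul_eq_mul, inv_mul_lt_one₀ hr]
    exact hφs a ha
  · rw [InnerProductSpace.toDual_symm_apply, smul_apply, smul_eq_mul, one_lt_inv_mul₀ hr]
    exact hφx

section AssocNorm

variable {X : Type*} [MeasurableSpace X] {μ : Measure X} {N : (X → ℝ≥0∞) → ℝ≥0∞}

lemma lintegral_mul_le_assocNorm {f : X → ℝ≥0∞} (g : X → ℝ≥0∞) (hf : Measurable f)
    (hf1 : N f ≤ 1) : ∫⁻ x, f x * g x ∂μ ≤ assocNorm μ N g :=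
  le_iSup₂_of_le f hf (le_iSup_of_le hf1 le_rfl)

lemma assocNorm_le {g : X → ℝ≥0∞} {c : ℝ≥0∞}
    (h : ∀ f, Measurable f → N f ≤ 1 → ∫⁻ x, f x * g x ∂μ ≤ c) : assocNorm μ N g ≤ c :=
  iSup₂_le fun f hf => iSup_le (h f hf)

lemma assocNorm_mono {g₁ g₂ : X → ℝ≥0∞} (h : g₁ ≤ g₂) :
    assocNorm μ N g₁ ≤ assocNorm μ N g₂ :=
  assocNorm_le fun f hf hf1 =>
    (lintegral_mono fun x => by gcongr; exact h x).trans (lintegral_mul_le_assocNorm _ hf hf1)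

lemma assocNorm_const_mul {g : X → ℝ≥0∞} (hg : Measurable g) (c : ℝ≥0∞) :
    assocNorm μ N (fun x => c * g x) = c * assocNorm μ N g := by
  simp only [assocNorm, ENNReal.mul_iSup]
  refine iSup_congr fun f => iSup_congr fun hf => iSup_congr fun _ => ?_
  rw [← lintegral_const_mul (f := fun x => f x * g x) _ (hf.mul hg)]
  exact lintegral_congr fun x => mul_left_comm _ _ _

end AssocNorm

def l2UnitBall {X : Type*} [MeasurableSpace X] (μ : Measure X) (N : (X → ℝ≥0∞) → ℝ≥0∞) :
    Set (Lp ℝ 2 μ) :=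
  {v | ∃ h : X → ℝ≥0, Measurable h ∧ N (fun x => h x) ≤ 1 ∧ ⇑v =ᵐ[μ] fun x => (h x : ℝ)}

namespace IsBallBanachFunctionSpace

variable {X : Type*} [MeasurableSpace X] {μ : Measure X} {ρ : X → X → ℝ}
  {N : (X → ℝ≥0∞) → ℝ≥0∞}

lemma lintegral_mul_le_mul_assocNorm (hN : IsBallBanachFunctionSpace μ ρ N)
    {f : X → ℝ≥0∞} (g : X → ℝ≥0∞) (hf : Measurable f) (hNf : N f ≠ ∞) :
    ∫⁻ x, f x * g x ∂μ ≤ N f * assocNorm μ N g := by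
  lift N f to ℝ≥0 using hNf with c hc
  rcases eq_or_ne c 0 with rfl | hc0
  · have hf0 : f =ᵐ[μ] 0 := (hN.zero_iff f hf).1 hc.symm
    have hfg0 : (fun x => f x * g x) =ᵐ[μ] 0 := hf0.mono fun x hx => by simp [hx]
    simp [lintegral_congr_ae hfg0]
  have hN_scaled : N (fun x => (c⁻¹ : ℝ≥0) * f x) ≤ 1 := by
    rw [hN.smul _ _ hf, ← hc, ← ENNReal.coe_mul, inv_mul_cancel₀ hc0, ENNReal.coe_one]
  calc ∫⁻ x, f x * g x ∂μ = c * ∫⁻ x, (c⁻¹ : ℝ≥0) * f x * g x ∂μ := by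
        rw [← lintegral_const_mul' _ _ ENNReal.coe_ne_top]
        refine lintegral_congr fun x => ?_
        rw [← mul_assoc, ← mul_assoc, ← ENNReal.coe_mul, mul_inv_cancel₀ hc0, ENNReal.coe_one,
          one_mul]
    _ ≤ c * assocNorm μ N g := by
        gcongr; exact lintegral_mul_le_assocNorm g (hf.const_mul _) hN_scaled

lemma assocNorm_assocNorm_le (hN : IsBallBanachFunctionSpace μ ρ N) {f : X → ℝ≥0∞}
    (hf : Measurable f) : assocNorm μ (assocNorm μ N) f ≤ N f := by
  rcases eq_or_ne (N f) ∞ with hNf | hNf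
  · simp [hNf]
  refine assocNorm_le fun g _ hg1 => ?_
  calc ∫⁻ x, g x * f x ∂μ = ∫⁻ x, f x * g x ∂μ := lintegral_congr fun x => mul_comm _ _
    _ ≤ N f * assocNorm μ N g := hN.lintegral_mul_le_mul_assocNorm g hf hNf
    _ ≤ N f := mul_le_of_le_one_right' hg1

lemma le_of_tendsto_ae (hN : IsBallBanachFunctionSpace μ ρ N) {h : ℕ → X → ℝ≥0∞}
    {f : X → ℝ≥0∞} (hh : ∀ k, Measurable (h k)) (hf : Measurable f)
    (hlim : ∀ᵐ x ∂μ, Tendsto (fun k => h k x) atTop (𝓝 (f x))) {c : ℝ≥0∞}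
    (hc : ∀ k, N (h k) ≤ c) : N f ≤ c := by
  set p : ℕ → X → ℝ≥0∞ := fun j x => ⨅ i, h (i + j) x
  have hp_mono : ∀ j, ∀ᵐ x ∂μ, p j x ≤ p (j + 1) x := fun j => ae_of_all _ fun x =>
    le_iInf fun i => iInf_le_of_le (i + 1) (by rw [add_assoc, add_comm 1 j])
  have hp_sup : ∀ᵐ x ∂μ, ⨆ j, p j x = f x := hlim.mono fun x hx => by
    rw [← hx.liminf_eq, liminf_eq_iSup_iInf_of_nat']
  rw [← hN.sup_lim p f (fun j => .iInf fun i => hh _) hf hp_mono hp_sup]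
  refine iSup_le fun j =>
    (hN.mono _ _ (hh j) (.iInf fun i => hh _) (ae_of_all _ fun x => ?_)).trans (hc j)
  simpa using iInf_le (fun i => h (i + j) x) 0

lemma convex_l2UnitBall (hN : IsBallBanachFunctionSpace μ ρ N) :
    Convex ℝ (l2UnitBall μ N) := by
  rintro v₁ ⟨h₁, hm₁, hN₁, he₁⟩ v₂ ⟨h₂, hm₂, hN₂, he₂⟩ a b ha hb hab
  refine ⟨fun x => a.toNNReal * h₁ x + b.toNNReal * h₂ x, by fun_prop, ?_, ?_⟩
  · calc N (fun x => ((a.toNNReal * h₁ x + b.toNNReal * h₂ x : ℝ≥0) : ℝ≥0∞))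
        = N (fun x => (a.toNNReal : ℝ≥0∞) * h₁ x + (b.toNNReal : ℝ≥0∞) * h₂ x) := by
          simp only [ENNReal.coe_add, ENNReal.coe_mul]
      _ ≤ a.toNNReal * N (fun x => h₁ x) + b.toNNReal * N (fun x => h₂ x) := by
          rw [← hN.smul _ _ (by fun_prop), ← hN.smul _ _ (by fun_prop)]
          exact hN.triangle _ _ (by fun_prop) (by fun_prop)
      _ ≤ a.toNNReal * 1 + b.toNNReal * 1 := by gcongr
      _ = 1 := by
          rw [mul_one, mul_one, ← ENNReal.coe_add, ← Real.toNNReal_add ha hb, hab]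
          simp
  · filter_upwards [Lp.coeFn_add (a • v₁) (b • v₂), Lp.coeFn_smul a v₁, Lp.coeFn_smul b v₂,
      he₁, he₂] with x hadd hsmul₁ hsmul₂ hx₁ hx₂
    rw [hadd, Pi.add_apply, hsmul₁, hsmul₂, Pi.smul_apply, Pi.smul_apply, hx₁, hx₂]
    simp [Real.coe_toNNReal _ ha, Real.coe_toNNReal _ hb]

lemma zero_mem_l2UnitBall (hN : IsBallBanachFunctionSpace μ ρ N) :
    (0 : Lp ℝ 2 μ) ∈ l2UnitBall μ N := by
  refine ⟨fun _ => 0, measurable_const, ?_, ?_⟩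
  · simp only [ENNReal.coe_zero]
    exact ((hN.zero_iff _ measurable_const).2 (ae_of_all _ fun _ => rfl)).trans_le zero_le_one
  · filter_upwards [Lp.coeFn_zero ℝ 2 μ] with x hx
    rw [hx]
    simp

lemma toLp_notMem_closure_l2UnitBall (hN : IsBallBanachFunctionSpace μ ρ N) {u : X → ℝ≥0}
    (hu : Measurable u) (hu₂ : MemLp (fun x => (u x : ℝ)) 2 μ)
    (hNu : 1 < N fun x => u x) : hu₂.toLp _ ∉ closure (l2UnitBall μ N) := by
  intro hmem
  obtain ⟨v, hvD, hv⟩ := mem_closure_iff_seq_limit.1 hmem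
  choose h hhm hhN hhv using hvD
  obtain ⟨ns, -, hae⟩ := (tendstoInMeasure_of_tendsto_Lp hv).exists_seq_tendsto_ae
  refine hNu.not_ge (hN.le_of_tendsto_ae (fun k => (hhm (ns k)).coe_nnreal_ennreal)
    hu.coe_nnreal_ennreal ?_ fun k => hhN (ns k))
  filter_upwards [hae, ae_all_iff.2 hhv, hu₂.coeFn_toLp] with x hx hhx hux
  simp only [hhx, hux] at hx
  exact ENNReal.tendsto_coe.2 (NNReal.tendsto_coe.1 hx)

lemma assocNorm_ofReal_le_one (hN : IsBallBanachFunctionSpace μ ρ N) {g : X → ℝ}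
    (hg : Measurable g) (hg₂ : MemLp g 2 μ)
    (hgh : ∀ h : X → ℝ≥0, Measurable h → (N fun x => h x) ≤ 1 →
      MemLp (fun x => (h x : ℝ)) 2 μ → ∫ x, g x * h x ∂μ ≤ 1) :
    assocNorm μ N (fun x => ENNReal.ofReal (g x)) ≤ 1 := by
  refine assocNorm_le fun f hf hf1 => ?_
  -- truncations of `f` that are dominated by multiples of `g⁺`, hence lie in `L²`
  set q : ℕ → X → ℝ≥0 := fun M x => (min (f x) (M * ENNReal.ofReal (g x))).toNNReal
  have hq_coe : ∀ M x, (q M x : ℝ≥0∞) = min (f x) (M * ENNReal.ofReal (g x)) := fun M x =>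
    ENNReal.coe_toNNReal (ne_top_of_le_ne_top (by finiteness) (min_le_right _ _))
  have hqm : ∀ M, Measurable (q M) := fun M =>
    (hf.min (measurable_const.mul hg.ennreal_ofReal)).ennreal_toNNReal
  have hq_le : ∀ M x, q M x ≤ M * (g x).toNNReal := fun M x => by
    rw [← ENNReal.coe_le_coe, hq_coe]
    exact min_le_right _ _
  have hq_int : ∀ M : ℕ, ∫⁻ x, q M x * ENNReal.ofReal (g x) ∂μ ≤ 1 := by
    intro M
    have hq₂ := hg₂.coe_of_le_mul_toNNReal (hqm M) (hq_le M)
    have hqN : (N fun x => q M x) ≤ 1 := by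
      refine (hN.mono _ _ hf (hqm M).coe_nnreal_ennreal (ae_of_all _ fun x => ?_)).trans hf1
      rw [hq_coe]
      exact min_le_left _ _
    have hnonneg : 0 ≤ᵐ[μ] fun x => g x * q M x := ae_of_all _ fun x => by
      rcases le_or_gt (g x) 0 with hgx | hgx
      · have hqx : q M x = 0 := le_antisymm ((hq_le M x).trans (by simp [hgx])) zero_le
        simp [hqx]
      · positivity
    rw [lintegral_coe_mul_ofReal (hg₂.integrable_mul hq₂) hnonneg]
    exact ENNReal.ofReal_le_one.2 (hgh _ (hqm M) hqN hq₂)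
  have hq_mono : Monotone fun M x => (q M x : ℝ≥0∞) * ENNReal.ofReal (g x) := by
    intro M M' hMM' x
    simp only [hq_coe]
    gcongr
  calc ∫⁻ x, f x * ENNReal.ofReal (g x) ∂μ
      = ∫⁻ x, ⨆ M : ℕ, (q M x : ℝ≥0∞) * ENNReal.ofReal (g x) ∂μ := by
        simp only [hq_coe, ENNReal.iSup_min_natCast_mul_mul]
    _ = ⨆ M : ℕ, ∫⁻ x, q M x * ENNReal.ofReal (g x) ∂μ :=
        lintegral_iSup (fun M => (hqm M).coe_nnreal_ennreal.mul hg.ennreal_ofReal) hq_mono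
    _ ≤ 1 := iSup_le hq_int

lemma one_lt_assocNorm_assocNorm_of_memLp (hN : IsBallBanachFunctionSpace μ ρ N)
    {u : X → ℝ≥0} (hu : Measurable u) (hu₂ : MemLp (fun x => (u x : ℝ)) 2 μ)
    (hNu : 1 < N fun x => u x) : 1 < assocNorm μ (assocNorm μ N) fun x => u x := by
  obtain ⟨y, hy_ball, hy_u⟩ := exists_inner_lt_one_lt_inner hN.convex_l2UnitBall.closure
    isClosed_closure (subset_closure hN.zero_mem_l2UnitBall)
    (hN.toLp_notMem_closure_l2UnitBall hu hu₂ hNu)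
  have hy : Measurable y := (Lp.stronglyMeasurable y).measurable
  have hy_inner : ∀ (v : Lp ℝ 2 μ) (h : X → ℝ), ⇑v =ᵐ[μ] h →
      inner ℝ y v = ∫ x, y x * h x ∂μ := by
    intro v h hv
    rw [L2.inner_def]
    refine integral_congr_ae ?_
    filter_upwards [hv] with x hx
    simp [hx, mul_comm]
  have hG : assocNorm μ N (fun x => ENNReal.ofReal (y x)) ≤ 1 :=
    hN.assocNorm_ofReal_le_one hy (Lp.memLp y) fun h hh hh1 hh₂ => by
      rw [← hy_inner _ _ hh₂.coeFn_toLp]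
      exact (hy_ball _ (subset_closure ⟨h, hh, hh1, hh₂.coeFn_toLp⟩)).le
  calc 1 < ENNReal.ofReal (∫ x, y x * u x ∂μ) := by
        rw [← hy_inner _ _ hu₂.coeFn_toLp]
        exact ENNReal.one_lt_ofReal.2 hy_u
    _ ≤ ∫⁻ x, ENNReal.ofReal (y x * u x) ∂μ := ofReal_integral_le_lintegral_ofReal _
    _ = ∫⁻ x, ENNReal.ofReal (y x) * u x ∂μ := lintegral_congr fun x => by
        rw [ENNReal.ofReal_mul' (NNReal.coe_nonneg _), ENNReal.ofReal_coe_nnreal]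
    _ ≤ assocNorm μ (assocNorm μ N) fun x => u x :=
        lintegral_mul_le_assocNorm _ hy.ennreal_ofReal hG

lemma le_assocNorm_assocNorm_of_memLp (hN : IsBallBanachFunctionSpace μ ρ N)
    {u : X → ℝ≥0} (hu : Measurable u) (hu₂ : MemLp (fun x => (u x : ℝ)) 2 μ) :
    (N fun x => u x) ≤ assocNorm μ (assocNorm μ N) fun x => u x := by
  refine ENNReal.le_of_forall_nnreal_lt fun t ht => ?_
  rcases eq_or_ne t 0 with rfl | ht0
  · simp
  have one_lt_iff : ∀ a : ℝ≥0∞, 1 < (t⁻¹ : ℝ≥0) * a ↔ t < a := fun a => by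
    rw [ENNReal.coe_inv ht0, mul_comm, ← div_eq_mul_inv,
      ENNReal.lt_div_iff_mul_lt (by simp [ht0]) (by simp), one_mul]
  have hscaled := hN.one_lt_assocNorm_assocNorm_of_memLp (u := fun x => t⁻¹ * u x)
    (by fun_prop) (by simpa using hu₂.const_mul (t⁻¹ : ℝ))
    (by simpa only [ENNReal.coe_mul, hN.smul _ _ hu.coe_nnreal_ennreal, one_lt_iff] using ht)
  simp only [ENNReal.coe_mul, assocNorm_const_mul hu.coe_nnreal_ennreal, one_lt_iff] at hscaled
  exact hscaled.le

lemma le_assocNorm_assocNorm [SigmaFinite μ] (hN : IsBallBanachFunctionSpace μ ρ N)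
    {f : X → ℝ≥0∞} (hf : Measurable f) :
    N f ≤ assocNorm μ (assocNorm μ N) f := by
  obtain ⟨F, hFm, hF₂, hF_mono, hF_sup⟩ := exists_monotone_memLp_two_iSup_eq (μ := μ) hf
  rw [← hN.sup_lim (fun n x => F n x) f (fun n => (hFm n).coe_nnreal_ennreal) hf
    (fun n => ae_of_all _ fun x => ENNReal.coe_le_coe.2 (hF_mono n.le_succ x))
    (ae_of_all _ hF_sup)]
  exact iSup_le fun n => (hN.le_assocNorm_assocNorm_of_memLp (hFm n) (hF₂ n)).trans
    (assocNorm_mono fun x => (le_iSup (fun k => (F k x : ℝ≥0∞)) n).trans_eq (hF_sup x))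

end IsBallBanachFunctionSpace

lemma sigmaFinite_of_measure_qball_lt_top {X : Type*} [MeasurableSpace X] {μ : Measure X}
    {ρ : X → X → ℝ} (hfin : ∀ (x : X) (r : ℝ), 0 < r → μ (qball ρ x r) < ∞) : SigmaFinite μ := by
  rcases isEmpty_or_nonempty X with hX | ⟨⟨x₀⟩⟩
  · infer_instance
  · refine Measure.sigmaFinite_of_countable (S := range fun n : ℕ => qball ρ x₀ (n + 1))
      (countable_range _) (forall_mem_range.2 fun n => hfin x₀ _ (by positivity)) ?_
    refine eq_univ_of_forall fun x => mem_sUnion_of_mem (x := x) ?_ (mem_range_self ⌈ρ x₀ x⌉₊)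
    exact (Nat.le_ceil (ρ x₀ x)).trans_lt (lt_add_one (⌈ρ x₀ x⌉₊ : ℝ))

theorem stmt10_general {X : Type*} [MeasurableSpace X] (μ : Measure X) (ρ : X → X → ℝ)
    (hfin : ∀ (x : X) (r : ℝ), 0 < r → μ (qball ρ x r) < ∞)
    (N : (X → ℝ≥0∞) → ℝ≥0∞)
    (hN : IsBallBanachFunctionSpace μ ρ N) :
    ∀ f : X → ℝ≥0∞, Measurable f →
      N f = assocNorm μ (assocNorm μ N) f ∧
      (N f < ∞ ↔ assocNorm μ (assocNorm μ N) f < ∞) := by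
  have := sigmaFinite_of_measure_qball_lt_top hfin
  intro f hf
  have hf_eq : N f = assocNorm μ (assocNorm μ N) f :=
    le_antisymm (hN.le_assocNorm_assocNorm hf) (hN.assocNorm_assocNorm_le hf)
  exact ⟨hf_eq, by rw [hf_eq]⟩

/-- Every ball Banach function space coincides with its second associate space,
with equality of norms (hence `f ∈ Y` iff `f ∈ Y''`). -/
theorem stmt10 {X : Type*} [MeasurableSpace X] (μ : Measure X) (ρ : X → X → ℝ)
    (A₀ : ℝ) (hA₀ : 1 ≤ A₀)
    (hρ_nonneg : ∀ x y, 0 ≤ ρ x y)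
    (hρ_eq : ∀ x y, ρ x y = 0 ↔ x = y)
    (hρ_symm : ∀ x y, ρ x y = ρ y x)
    (hρ_tri : ∀ x y z, ρ x z ≤ A₀ * (ρ x y + ρ y z))
    (hpos : ∀ (x : X) (r : ℝ), 0 < r → 0 < μ (qball ρ x r))
    (hfin : ∀ (x : X) (r : ℝ), 0 < r → μ (qball ρ x r) < ∞)
    (N : (X → ℝ≥0∞) → ℝ≥0∞)
    (hN : IsBallBanachFunctionSpace μ ρ N) :
    ∀ f : X → ℝ≥0∞, Measurable f →
      N f = assocNorm μ (assocNorm μ N) f ∧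
      (N f < ∞ ↔ assocNorm μ (assocNorm μ N) f < ∞) :=
  stmt10_general μ ρ hfin N hN
end

section
/- Let (X, ρ, μ) be a space of homogeneous type, x₀ ∈ X, ε ∈ (0,1), and set w := [M(𝟏_{B(x₀,1)})]^ε, where M is the Hardy–Littlewood maximal operator. Then w is a Muckenhoupt A₁(X) weight: there exists C > 0 such that for every ball B ⊂ X and almost every x ∈ B, (1/μ(B)) ∫_B w(y) dμ(y) ≤ C w(x). -/
/-!
Let `t = ∫ 𝟏_{B(x₀,1)} dμ` and `V(y) = μ(B(x₀, ρ(x₀,y) + 1))`. A ball through `y` meeting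
`B(x₀,1)` either has radius `< 1`, so that `y` stays close to `x₀`, or contains
`B(x₀, ρ(x₀,y) + 1)` after a bounded dilation. Hence `M 𝟏_{B(x₀,1)} ≍ t / V` when `t ≠ 0`,
and it suffices to show that `V^{-ε}` is an `A₁` weight.

On a ball `B` of radius `r`, either `r ≤ ρ(x₀,y) + 1` for all `y ∈ B`, and then `V` is
essentially constant on `B`, or `B` is comparable to `B(x₀, 4A₀²r)`. On a ball `B(x₀,R)`,
`V^{-ε} ≤ μ(B(x₀,2ⁿ))^{-ε}` off `B(x₀,2ⁿ)`; by doubling and concavity of `u ↦ u^{1-ε}`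
the sum over the dyadic shells telescopes to `∫_{B(x₀,R)} V^{-ε} dμ ≲ μ(B(x₀,R))^{1-ε}`.
-/

open MeasureTheory Set
open scoped ENNReal

/-- The uncentered Hardy–Littlewood maximal operator. -/
noncomputable def hlMax {X : Type*} [MeasurableSpace X] (ρ : X → X → ℝ) (μ : Measure X)
    (f : X → ℝ≥0∞) (x : X) : ℝ≥0∞ :=
  ⨆ (c : X) (r : ℝ) (_ : x ∈ qball ρ c r),
    (μ (qball ρ c r))⁻¹ * ∫⁻ y in qball ρ c r, f y ∂μ

theorem Real.rpow_neg_mul_sub_le {a b C ε : ℝ} (ha : 0 < a) (hab : a ≤ b) (hbC : b ≤ C * a)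
    (hε0 : 0 < ε) (hε1 : ε < 1) :
    a ^ (-ε) * (b - a) ≤ C / (1 - ε) * (b ^ (1 - ε) - a ^ (1 - ε)) := by
  have hb : 0 < b := ha.trans_le hab
  have hbb : b ^ (-ε) * b ^ ε = 1 := by rw [← Real.rpow_add hb]; simp
  -- concavity of `u ↦ u ^ (1 - ε)`, in the form of the weighted AM-GM inequality
  have hconcave : (1 - ε) * (b ^ (-ε) * (b - a)) ≤ b ^ (1 - ε) - a ^ (1 - ε) := by
    have hamgm : b ^ ε * a ^ (1 - ε) ≤ ε * b + (1 - ε) * a :=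
      Real.geom_mean_le_arith_mean2_weighted hε0.le (by linarith) hb.le ha.le (by ring)
    have hb' : b ^ (1 - ε) = b ^ (-ε) * b := by
      rw [sub_eq_neg_add, Real.rpow_add hb, Real.rpow_one]
    have := mul_le_mul_of_nonneg_left hamgm (Real.rpow_nonneg hb.le (-ε))
    rw [← mul_assoc, hbb, one_mul] at this
    rw [hb']
    linarith
  have hcomp : a ^ (-ε) ≤ C * b ^ (-ε) := by
    have hratio : (b / a) ^ ε ≤ C :=
      (Real.rpow_le_self_of_one_le ((one_le_div ha).2 hab) hε1.le).trans
        ((div_le_iff₀ ha).2 hbC)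
    calc a ^ (-ε) = (b / a) ^ ε * b ^ (-ε) := by
          rw [Real.div_rpow hb.le ha.le, div_mul_eq_mul_div, mul_comm, hbb,
            Real.rpow_neg ha.le, one_div]
      _ ≤ C * b ^ (-ε) := by gcongr
  have hC : 0 < C := pos_of_mul_pos_left (hb.trans_le hbC) ha.le
  calc a ^ (-ε) * (b - a) ≤ C * b ^ (-ε) * (b - a) := by gcongr
    _ = C / (1 - ε) * ((1 - ε) * (b ^ (-ε) * (b - a))) := by
      field_simp [show 1 - ε ≠ 0 by linarith]
    _ ≤ C / (1 - ε) * (b ^ (1 - ε) - a ^ (1 - ε)) := by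
      gcongr

theorem ENNReal.inv_rpow_mul_sub_add_le {a b C : ℝ≥0∞} {ε : ℝ} (ha : a ≠ 0) (hb : b ≠ ∞)
    (hC : C ≠ ∞) (hab : a ≤ b) (hbC : b ≤ C * a) (hε0 : 0 < ε) (hε1 : ε < 1) :
    a⁻¹ ^ ε * (b - a) + C / ENNReal.ofReal (1 - ε) * a ^ (1 - ε)
      ≤ C / ENNReal.ofReal (1 - ε) * b ^ (1 - ε) := by
  obtain ⟨a, ha0, rfl⟩ : ∃ a' : ℝ, 0 ≤ a' ∧ a = ENNReal.ofReal a' :=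
    ⟨a.toReal, ENNReal.toReal_nonneg, (ENNReal.ofReal_toReal (ne_top_of_le_ne_top hb hab)).symm⟩
  obtain ⟨b, hb0, rfl⟩ : ∃ b' : ℝ, 0 ≤ b' ∧ b = ENNReal.ofReal b' :=
    ⟨b.toReal, ENNReal.toReal_nonneg, (ENNReal.ofReal_toReal hb).symm⟩
  obtain ⟨C, hC0, rfl⟩ : ∃ C' : ℝ, 0 ≤ C' ∧ C = ENNReal.ofReal C' :=
    ⟨C.toReal, ENNReal.toReal_nonneg, (ENNReal.ofReal_toReal hC).symm⟩
  have ha : 0 < a := by simpa using ha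
  have hε : 0 < 1 - ε := by linarith
  rw [← ENNReal.ofReal_mul hC0, ENNReal.ofReal_le_ofReal_iff (by positivity)] at hbC
  rw [ENNReal.ofReal_le_ofReal_iff hb0] at hab
  have key := Real.rpow_neg_mul_sub_le ha hab hbC hε0 hε1
  rw [← ENNReal.ofReal_div_of_pos hε, ← ENNReal.ofReal_inv_of_pos ha,
    ENNReal.ofReal_rpow_of_pos (inv_pos.2 ha), ENNReal.ofReal_rpow_of_pos ha,
    ENNReal.ofReal_rpow_of_pos (ha.trans_le hab), ← ENNReal.ofReal_sub _ ha.le,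
    ← ENNReal.ofReal_mul (by positivity), ← ENNReal.ofReal_mul (by positivity),
    ← ENNReal.ofReal_mul (by positivity),
    ← ENNReal.ofReal_add (mul_nonneg (by positivity) (by linarith)) (by positivity)]
  apply ENNReal.ofReal_le_ofReal
  rw [Real.inv_rpow ha.le, ← Real.rpow_neg ha.le]
  linarith

theorem ENNReal.inv_le_mul_inv_of_le_mul {a b K : ℝ≥0∞} (hK0 : K ≠ 0) (hK : K ≠ ∞)
    (h : a ≤ K * b) : b⁻¹ ≤ K * a⁻¹ :=
  calc b⁻¹ = K * (K * b)⁻¹ := by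
        rw [ENNReal.mul_inv (.inl hK0) (.inl hK), ← mul_assoc, ENNReal.mul_inv_cancel hK0 hK,
          one_mul]
    _ ≤ K * a⁻¹ := by gcongr

section Lintegral

variable {X : Type*} [MeasurableSpace X] {μ : Measure X}

theorem setLIntegral_le_mul_measure {s : Set X} {f : X → ℝ≥0∞} {c : ℝ≥0∞}
    (hf : ∀ y ∈ s, f y ≤ c) : ∫⁻ y in s, f y ∂μ ≤ c * μ s := by
  -- `s` need not be measurable, so pass to a measurable minorant of `f` with the same integral
  obtain ⟨g, hgm, hgf, hg⟩ := exists_measurable_le_lintegral_eq (μ.restrict s) f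
  have hgc : ∀ᵐ y ∂μ.restrict s, g y ≤ c := by
    change μ.restrict s {y | g y ≤ c}ᶜ = 0
    rw [Measure.restrict_apply (measurableSet_le hgm measurable_const).compl]
    refine measure_mono_null (fun y ⟨hy, hys⟩ => hy ((hgf y).trans (hf y hys))) measure_empty
  calc ∫⁻ y in s, f y ∂μ = ∫⁻ y in s, g y ∂μ := hg
    _ ≤ ∫⁻ _ in s, c ∂μ := lintegral_mono_ae hgc
    _ = c * μ s := setLIntegral_const s c

theorem exists_monotone_measurableSet_superset_measure_eq (μ : Measure X) {s : ℕ → Set X}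
    (hs : Monotone s) :
    ∃ m : ℕ → Set X, Monotone m ∧ (∀ n, MeasurableSet (m n)) ∧ (∀ n, s n ⊆ m n) ∧
      ∀ n, μ (m n) = μ (s n) := by
  have hsub (n : ℕ) : s n ⊆ ⋂ i, toMeasurable μ (s (n + i)) :=
    subset_iInter fun i => (hs (n.le_add_right i)).trans (subset_toMeasurable μ _)
  refine ⟨fun n => ⋂ i, toMeasurable μ (s (n + i)), fun n n' hnn' => ?_,
    fun n => .iInter fun i => measurableSet_toMeasurable μ _, hsub, fun n =>
      le_antisymm ((measure_mono (iInter_subset _ 0)).trans_eq (measure_toMeasurable _))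
        (measure_mono (hsub n))⟩
  refine subset_iInter fun i => ?_
  obtain ⟨k, rfl⟩ := Nat.exists_eq_add_of_le hnn'
  exact (iInter_subset _ (k + i)).trans_eq (by rw [add_assoc])

theorem setLIntegral_le_of_le_inv_measure_rpow {s : ℕ → Set X} (hs : Monotone s) {C : ℝ≥0∞}
    (hC : C ≠ ∞) (hgrowth : ∀ n, μ (s (n + 1)) ≤ C * μ (s n)) (hpos : μ (s 0) ≠ 0)
    (hfin : ∀ n, μ (s n) ≠ ∞) {ε : ℝ} (hε0 : 0 < ε) (hε1 : ε < 1) {f : X → ℝ≥0∞}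
    (hf₀ : ∀ y, f y ≤ (μ (s 0))⁻¹ ^ ε) (hf : ∀ n, ∀ y ∉ s n, f y ≤ (μ (s n))⁻¹ ^ ε) (n : ℕ) :
    ∫⁻ y in s n, f y ∂μ ≤ μ (s 0) ^ (1 - ε) + C / ENNReal.ofReal (1 - ε) * μ (s n) ^ (1 - ε) := by
  -- the shells `s (n+1) \ s n` need not be measurable, so telescope over measurable hulls
  obtain ⟨m, hm, hmeas, hsm, hμm⟩ := exists_monotone_measurableSet_superset_measure_eq μ hs
  refine (lintegral_mono_set (hsm n)).trans ?_
  induction n with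
  | zero =>
    calc ∫⁻ y in m 0, f y ∂μ ≤ (μ (s 0))⁻¹ ^ ε * μ (m 0) :=
          setLIntegral_le_mul_measure fun y _ => hf₀ y
      _ = μ (s 0) ^ (1 - ε) := by
        rw [hμm, ENNReal.inv_rpow, ← ENNReal.rpow_neg, sub_eq_neg_add,
          ENNReal.rpow_add _ _ hpos (hfin 0), ENNReal.rpow_one]
      _ ≤ _ := le_self_add
  | succ n ih =>
    have hshell : ∫⁻ y in m (n + 1) \ m n, f y ∂μ
        ≤ (μ (s n))⁻¹ ^ ε * (μ (s (n + 1)) - μ (s n)) := by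
      refine (setLIntegral_le_mul_measure fun y hy => hf n y fun h => hy.2 (hsm n h)).trans_eq ?_
      rw [measure_sdiff (hm n.le_succ) (hmeas n).nullMeasurableSet (hμm n ▸ hfin n), hμm, hμm]
    have hpos' : μ (s n) ≠ 0 := ne_bot_of_le_ne_bot hpos (measure_mono (hs n.zero_le))
    calc ∫⁻ y in m (n + 1), f y ∂μ ≤ ∫⁻ y in m n, f y ∂μ + ∫⁻ y in m (n + 1) \ m n, f y ∂μ :=
          (lintegral_mono_set (union_sdiff_cancel (hm n.le_succ)).superset).trans
            (lintegral_union_le f _ _)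
      _ ≤ _ := add_le_add ih hshell
      _ ≤ _ := by
        rw [add_assoc, add_comm (_ * _ ^ _)]
        gcongr
        exact ENNReal.inv_rpow_mul_sub_add_le hpos' (hfin (n + 1)) hC
          (measure_mono (hs n.le_succ)) (hgrowth n) hε0 hε1

end Lintegral

theorem qball_mono {X : Type*} (ρ : X → X → ℝ) (z : X) {r₁ r₂ : ℝ} (h : r₁ ≤ r₂) :
    qball ρ z r₁ ⊆ qball ρ z r₂ :=
  fun _ hy => lt_of_lt_of_le hy h

section Maximal

variable {X : Type*} [MeasurableSpace X] {μ : Measure X} {ρ : X → X → ℝ}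

theorem inv_measure_mul_setLIntegral_le_one {f : X → ℝ≥0∞} (hf : ∀ y, f y ≤ 1) (s : Set X) :
    (μ s)⁻¹ * ∫⁻ y in s, f y ∂μ ≤ 1 :=
  calc (μ s)⁻¹ * ∫⁻ y in s, f y ∂μ ≤ (μ s)⁻¹ * (1 * μ s) := by
        gcongr; exact setLIntegral_le_mul_measure fun y _ => hf y
    _ ≤ 1 := by rw [one_mul]; exact ENNReal.inv_mul_le_one _

theorem le_hlMax (f : X → ℝ≥0∞) {x c : X} {r : ℝ} (hx : x ∈ qball ρ c r) :
    (μ (qball ρ c r))⁻¹ * ∫⁻ y in qball ρ c r, f y ∂μ ≤ hlMax ρ μ f x :=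
  le_iSup_of_le c <| le_iSup_of_le r <| le_iSup_of_le hx le_rfl

theorem hlMax_le {f : X → ℝ≥0∞} {x : X} {V : ℝ≥0∞}
    (H : ∀ c r, x ∈ qball ρ c r → (μ (qball ρ c r))⁻¹ * ∫⁻ y in qball ρ c r, f y ∂μ ≤ V) :
    hlMax ρ μ f x ≤ V :=
  iSup₂_le fun c r => iSup_le (H c r)

end Maximal

def A1With {X : Type*} [MeasurableSpace X] (μ : Measure X) (ρ : X → X → ℝ) (C : ℝ≥0∞)
    (w : X → ℝ≥0∞) : Prop :=
  ∀ c r, ∀ x ∈ qball ρ c r, ∫⁻ y in qball ρ c r, w y ∂μ ≤ C * μ (qball ρ c r) * w x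

namespace A1With

variable {X : Type*} [MeasurableSpace X] {μ : Measure X} {ρ : X → X → ℝ} {C : ℝ≥0∞}
  {w : X → ℝ≥0∞}

theorem mono (hw : A1With μ ρ C w) {C' : ℝ≥0∞} (hC : C ≤ C') : A1With μ ρ C' w :=
  fun c r x hx => (hw c r x hx).trans (by gcongr)

theorem of_le_of_le (hw : A1With μ ρ C w) {w' : X → ℝ≥0∞} {a b : ℝ≥0∞} (ha0 : a ≠ 0)
    (ha : a ≠ ∞) (hb : b ≠ ∞) (hlow : ∀ y, a * w y ≤ w' y) (hup : ∀ y, w' y ≤ b * w y) :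
    A1With μ ρ (b * C * a⁻¹) w' := fun c r x hx =>
  calc ∫⁻ y in qball ρ c r, w' y ∂μ ≤ ∫⁻ y in qball ρ c r, b * w y ∂μ := lintegral_mono hup
    _ = b * ∫⁻ y in qball ρ c r, w y ∂μ := lintegral_const_mul' b _ hb
    _ ≤ b * (C * μ (qball ρ c r) * (a⁻¹ * w' x)) := by
      gcongr
      exact (hw c r x hx).trans (by gcongr; exact (ENNReal.mul_le_iff_le_inv ha0 ha).1 (hlow x))
    _ = b * C * a⁻¹ * μ (qball ρ c r) * w' x := by ring

theorem inv_measure_mul_setLIntegral_le (hw : A1With μ ρ C w) {c x : X} {r : ℝ}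
    (hx : x ∈ qball ρ c r) (h0 : μ (qball ρ c r) ≠ 0) (htop : μ (qball ρ c r) ≠ ∞) :
    (μ (qball ρ c r))⁻¹ * ∫⁻ y in qball ρ c r, w y ∂μ ≤ C * w x := by
  rw [ENNReal.inv_mul_le_iff h0 htop, mul_left_comm, ← mul_assoc]
  exact hw c r x hx

end A1With

noncomputable def radialVolume {X : Type*} [MeasurableSpace X] (μ : Measure X)
    (ρ : X → X → ℝ) (x₀ y : X) : ℝ≥0∞ :=
  μ (qball ρ x₀ (ρ x₀ y + 1))

structure IsHomogeneousType {X : Type*} [MeasurableSpace X] (μ : Measure X) (ρ : X → X → ℝ)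
    (A₀ : ℝ) (Cμ : ℝ≥0∞) : Prop where
  one_le_quasiTriangleConst : 1 ≤ A₀
  nonneg : ∀ x y, 0 ≤ ρ x y
  symm : ∀ x y, ρ x y = ρ y x
  quasiTriangle : ∀ x y z, ρ x z ≤ A₀ * (ρ x y + ρ y z)
  one_le_doublingConst : 1 ≤ Cμ
  doublingConst_ne_top : Cμ ≠ ∞
  doubling : ∀ x r, μ (qball ρ x (2 * r)) ≤ Cμ * μ (qball ρ x r)
  measure_qball_pos : ∀ x r, 0 < r → 0 < μ (qball ρ x r)
  measure_qball_lt_top : ∀ x r, 0 < r → μ (qball ρ x r) < ∞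

namespace IsHomogeneousType

variable {X : Type*} [MeasurableSpace X] {μ : Measure X} {ρ : X → X → ℝ} {A₀ : ℝ} {Cμ : ℝ≥0∞}

theorem pos_of_mem_qball (h : IsHomogeneousType μ ρ A₀ Cμ) {x c : X} {r : ℝ}
    (hx : x ∈ qball ρ c r) : 0 < r :=
  (h.nonneg c x).trans_lt hx

theorem measure_qball_ne_zero (h : IsHomogeneousType μ ρ A₀ Cμ) (x : X) {r : ℝ} (hr : 0 < r) :
    μ (qball ρ x r) ≠ 0 :=
  (h.measure_qball_pos x r hr).ne'

theorem measure_qball_ne_top (h : IsHomogeneousType μ ρ A₀ Cμ) (x : X) {r : ℝ} (hr : 0 < r) :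
    μ (qball ρ x r) ≠ ∞ :=
  (h.measure_qball_lt_top x r hr).ne

theorem quasiTriangle_lt (h : IsHomogeneousType μ ρ A₀ Cμ) {x y z : X} {a b : ℝ}
    (hxy : ρ x y < a) (hyz : ρ y z < b) : ρ x z < A₀ * (a + b) :=
  (h.quasiTriangle x y z).trans_lt <|
    mul_lt_mul_of_pos_left (add_lt_add hxy hyz) (zero_lt_one.trans_le h.one_le_quasiTriangleConst)

theorem dist_lt_of_mem_qball (h : IsHomogeneousType μ ρ A₀ Cμ) {c x y : X} {r : ℝ}
    (hx : x ∈ qball ρ c r) (hy : y ∈ qball ρ c r) : ρ x y < A₀ * (r + r) :=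
  h.quasiTriangle_lt (by rw [h.symm]; exact hx) hy

theorem qball_subset_qball (h : IsHomogeneousType μ ρ A₀ Cμ) (x z : X) (r : ℝ) :
    qball ρ x r ⊆ qball ρ z (A₀ * (ρ z x + r)) := fun _ hu =>
  (h.quasiTriangle z x _).trans_lt <| mul_lt_mul_of_pos_left ((add_lt_add_iff_left _).2 hu)
    (zero_lt_one.trans_le h.one_le_quasiTriangleConst)

theorem measure_qball_two_pow_mul_le (h : IsHomogeneousType μ ρ A₀ Cμ) (z : X) (s : ℝ) (n : ℕ) :
    μ (qball ρ z (2 ^ n * s)) ≤ Cμ ^ n * μ (qball ρ z s) := by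
  induction n with
  | zero => simp
  | succ n ih =>
    calc μ (qball ρ z (2 ^ (n + 1) * s)) = μ (qball ρ z (2 * (2 ^ n * s))) := by ring_nf
      _ ≤ Cμ * (Cμ ^ n * μ (qball ρ z s)) := (h.doubling z _).trans (by gcongr)
      _ = Cμ ^ (n + 1) * μ (qball ρ z s) := by ring

theorem exists_measure_qball_mul_le (h : IsHomogeneousType μ ρ A₀ Cμ) (L : ℝ) :
    ∃ K : ℝ≥0∞, 1 ≤ K ∧ K ≠ ∞ ∧
      ∀ z s, 0 ≤ s → μ (qball ρ z (L * s)) ≤ K * μ (qball ρ z s) := by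
  obtain ⟨k, hk⟩ := pow_unbounded_of_one_lt L one_lt_two
  refine ⟨Cμ ^ k, one_le_pow₀ h.one_le_doublingConst,
    ENNReal.pow_ne_top h.doublingConst_ne_top, fun z s hs => ?_⟩
  exact (measure_mono (qball_mono ρ z (by gcongr))).trans (h.measure_qball_two_pow_mul_le z s k)

theorem exists_measure_qball_le (h : IsHomogeneousType μ ρ A₀ Cμ) (L : ℝ) :
    ∃ K : ℝ≥0∞, 1 ≤ K ∧ K ≠ ∞ ∧ ∀ x r z s, 0 ≤ s → A₀ * (ρ z x + r) ≤ L * s →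
      μ (qball ρ x r) ≤ K * μ (qball ρ z s) := by
  obtain ⟨K, hK1, hK, hKL⟩ := h.exists_measure_qball_mul_le L
  exact ⟨K, hK1, hK, fun x r z s hs hL =>
    (measure_mono ((h.qball_subset_qball x z r).trans (qball_mono ρ z hL))).trans (hKL z s hs)⟩

theorem quasiTriangleConst_le_sq (h : IsHomogeneousType μ ρ A₀ Cμ) : A₀ ≤ A₀ ^ 2 := by
  nlinarith [h.one_le_quasiTriangleConst]

theorem add_one_le_of_mem_qball_of_le (h : IsHomogeneousType μ ρ A₀ Cμ) {x₀ c x y : X} {r : ℝ}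
    (hx : x ∈ qball ρ c r) (hy : y ∈ qball ρ c r) (hr : r ≤ ρ x₀ y + 1) :
    ρ x₀ x + 1 ≤ 4 * A₀ ^ 2 * (ρ x₀ y + 1) := by
  set d := ρ x₀ y + 1
  have hA := h.one_le_quasiTriangleConst
  have hd : 1 ≤ d := by linarith [h.nonneg x₀ y]
  have hyx : ρ y x ≤ A₀ * (d + d) :=
    (h.dist_lt_of_mem_qball hy hx).le.trans (by gcongr)
  calc ρ x₀ x + 1 ≤ A₀ * (ρ x₀ y + ρ y x) + 1 := by linarith [h.quasiTriangle x₀ y x]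
    _ ≤ A₀ * (d + A₀ * (d + d)) + d := by gcongr; linarith
    _ = A₀ * d + 2 * A₀ ^ 2 * d + d := by ring
    _ ≤ 4 * A₀ ^ 2 * d := by nlinarith [h.quasiTriangleConst_le_sq]

theorem add_one_lt_of_mem_qball_of_lt (h : IsHomogeneousType μ ρ A₀ Cμ) {x₀ c u y : X} {r : ℝ}
    (hu : u ∈ qball ρ c r) (hy : y ∈ qball ρ c r) (hr : ρ x₀ y + 1 < r) :
    ρ x₀ u + 1 < 4 * A₀ ^ 2 * r := by
  have hA := h.one_le_quasiTriangleConst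
  have hr1 : 1 < r := by linarith [h.nonneg x₀ y]
  calc ρ x₀ u + 1 < A₀ * (r + A₀ * (r + r)) + r :=
        add_lt_add (h.quasiTriangle_lt (by linarith) (h.dist_lt_of_mem_qball hy hu)) hr1
    _ = A₀ * r + 2 * A₀ ^ 2 * r + r := by ring
    _ ≤ 4 * A₀ ^ 2 * r := by nlinarith [h.quasiTriangleConst_le_sq]

theorem dist_add_le_of_mem_qball_of_lt (h : IsHomogeneousType μ ρ A₀ Cμ) {x₀ c y : X} {r : ℝ}
    (hy : y ∈ qball ρ c r) (hr : ρ x₀ y + 1 < r) :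
    A₀ * (ρ c x₀ + 4 * A₀ ^ 2 * r) ≤ 6 * A₀ ^ 3 * r := by
  have hA := h.one_le_quasiTriangleConst
  have hr0 : 0 < r := by linarith [h.nonneg x₀ y]
  have hcx₀ : ρ c x₀ ≤ A₀ * (r + r) :=
    (h.quasiTriangle_lt hy (by rw [h.symm]; linarith [h.nonneg x₀ y])).le
  calc A₀ * (ρ c x₀ + 4 * A₀ ^ 2 * r) ≤ A₀ * (A₀ * (r + r) + 4 * A₀ ^ 2 * r) := by gcongr
    _ = 2 * A₀ ^ 2 * r + 4 * A₀ ^ 3 * r := by ring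
    _ ≤ 6 * A₀ ^ 3 * r := by
      nlinarith [mul_le_mul_of_nonneg_right (pow_le_pow_right₀ hA (by norm_num : 2 ≤ 3)) hr0.le]

theorem dist_add_le_of_mem_qball_of_one_le (h : IsHomogeneousType μ ρ A₀ Cμ) {x₀ z y w : X}
    {s : ℝ} (hy : y ∈ qball ρ z s) (hw : w ∈ qball ρ z s) (hw₀ : ρ x₀ w < 1) (hs : 1 ≤ s) :
    A₀ * (ρ z x₀ + (ρ x₀ y + 1)) ≤ 6 * A₀ ^ 3 * s := by
  have hA := h.one_le_quasiTriangleConst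
  have hzx₀ : ρ z x₀ ≤ A₀ * (s + s) :=
    (h.quasiTriangle_lt hw (by rw [h.symm]; linarith)).le
  have hx₀y : ρ x₀ y ≤ A₀ * (s + A₀ * (s + s)) :=
    (h.quasiTriangle_lt (hw₀.trans_le hs) (h.dist_lt_of_mem_qball hw hy)).le
  calc A₀ * (ρ z x₀ + (ρ x₀ y + 1)) ≤ A₀ * (A₀ * (s + s) + (A₀ * (s + A₀ * (s + s)) + s)) := by
        gcongr
    _ = 2 * A₀ ^ 2 * s + A₀ ^ 2 * s + 2 * A₀ ^ 3 * s + A₀ * s := by ring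
    _ ≤ 6 * A₀ ^ 3 * s := by
      have h23 := mul_le_mul_of_nonneg_right (pow_le_pow_right₀ hA (by norm_num : 2 ≤ 3))
        (zero_le_one.trans hs)
      nlinarith [h.quasiTriangleConst_le_sq]

theorem add_one_le_of_mem_qball_of_lt_one (h : IsHomogeneousType μ ρ A₀ Cμ) {x₀ z y w : X}
    {s : ℝ} (hy : y ∈ qball ρ z s) (hw : w ∈ qball ρ z s) (hw₀ : ρ x₀ w < 1) (hs : s < 1) :
    ρ x₀ y + 1 ≤ 4 * A₀ ^ 2 := by
  have hA := h.one_le_quasiTriangleConst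
  have hx₀y : ρ x₀ y ≤ A₀ * (1 + A₀ * (1 + 1)) :=
    (h.quasiTriangle_lt hw₀ ((h.dist_lt_of_mem_qball hw hy).trans_le (by gcongr))).le
  nlinarith [h.quasiTriangleConst_le_sq]

theorem radialVolume_ne_zero (h : IsHomogeneousType μ ρ A₀ Cμ) (x₀ y : X) :
    radialVolume μ ρ x₀ y ≠ 0 :=
  h.measure_qball_ne_zero x₀ (by linarith [h.nonneg x₀ y])

theorem radialVolume_ne_top (h : IsHomogeneousType μ ρ A₀ Cμ) (x₀ y : X) :
    radialVolume μ ρ x₀ y ≠ ∞ :=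
  h.measure_qball_ne_top x₀ (by linarith [h.nonneg x₀ y])

theorem exists_setLIntegral_inv_radialVolume_rpow_le (h : IsHomogeneousType μ ρ A₀ Cμ) (x₀ : X)
    {ε : ℝ} (hε0 : 0 < ε) (hε1 : ε < 1) :
    ∃ C : ℝ≥0∞, C ≠ ∞ ∧ ∀ R, 1 ≤ R →
      ∫⁻ y in qball ρ x₀ R, (radialVolume μ ρ x₀ y)⁻¹ ^ ε ∂μ ≤ C * μ (qball ρ x₀ R) ^ (1 - ε) := by
  set s : ℕ → Set X := fun n => qball ρ x₀ (2 ^ n)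
  set κ := Cμ / ENNReal.ofReal (1 - ε)
  have hs : Monotone s := fun m n hmn => qball_mono ρ x₀ (pow_le_pow_right₀ one_le_two hmn)
  have hgrowth (n : ℕ) : μ (s (n + 1)) ≤ Cμ * μ (s n) := by
    simpa only [s, pow_succ, mul_comm] using h.doubling x₀ (2 ^ n)
  have hf₀ (y : X) : (radialVolume μ ρ x₀ y)⁻¹ ^ ε ≤ (μ (s 0))⁻¹ ^ ε := by
    gcongr
    exact measure_mono (qball_mono ρ x₀ (by simp [h.nonneg x₀ y]))
  have hf (n : ℕ) (y : X) (hy : y ∉ s n) : (radialVolume μ ρ x₀ y)⁻¹ ^ ε ≤ (μ (s n))⁻¹ ^ ε := by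
    gcongr
    simp only [s, qball, mem_ofPred_eq, not_lt] at hy
    exact measure_mono (qball_mono ρ x₀ (by linarith))
  have htelescope := setLIntegral_le_of_le_inv_measure_rpow hs h.doublingConst_ne_top hgrowth
    (h.measure_qball_ne_zero x₀ (by simp)) (fun n => h.measure_qball_ne_top x₀ (by positivity))
    hε0 hε1 hf₀ hf
  refine ⟨(1 + κ) * Cμ ^ (1 - ε), ?_, fun R hR => ?_⟩
  · have : κ ≠ ∞ := ENNReal.div_ne_top h.doublingConst_ne_top (ENNReal.ofReal_pos.2 (by linarith)).ne'
    have := ENNReal.rpow_ne_top_of_nonneg (y := 1 - ε) (by linarith) h.doublingConst_ne_top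
    finiteness
  obtain ⟨n, hnR, hRn⟩ := exists_nat_pow_near hR one_lt_two
  have hμ : μ (s (n + 1)) ≤ Cμ * μ (qball ρ x₀ R) :=
    (hgrowth n).trans (by gcongr; exact qball_mono ρ x₀ hnR)
  calc ∫⁻ y in qball ρ x₀ R, (radialVolume μ ρ x₀ y)⁻¹ ^ ε ∂μ
      ≤ ∫⁻ y in s (n + 1), (radialVolume μ ρ x₀ y)⁻¹ ^ ε ∂μ :=
        lintegral_mono_set (qball_mono ρ x₀ hRn.le)
    _ ≤ μ (s 0) ^ (1 - ε) + κ * μ (s (n + 1)) ^ (1 - ε) := htelescope (n + 1)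
    _ ≤ (1 + κ) * μ (s (n + 1)) ^ (1 - ε) := by
      rw [add_mul, one_mul]
      gcongr
      exact hs n.succ.zero_le
    _ ≤ (1 + κ) * (Cμ * μ (qball ρ x₀ R)) ^ (1 - ε) := by gcongr
    _ = (1 + κ) * Cμ ^ (1 - ε) * μ (qball ρ x₀ R) ^ (1 - ε) := by
      rw [ENNReal.mul_rpow_of_nonneg _ _ (by linarith), mul_assoc]

theorem exists_setLIntegral_inv_radialVolume_rpow_le_of_forall_le
    (h : IsHomogeneousType μ ρ A₀ Cμ) (x₀ : X) {ε : ℝ} (hε0 : 0 < ε) :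
    ∃ K : ℝ≥0∞, K ≠ ∞ ∧ ∀ c r, ∀ x ∈ qball ρ c r, (∀ y ∈ qball ρ c r, r ≤ ρ x₀ y + 1) →
      ∫⁻ y in qball ρ c r, (radialVolume μ ρ x₀ y)⁻¹ ^ ε ∂μ
        ≤ K * μ (qball ρ c r) * (radialVolume μ ρ x₀ x)⁻¹ ^ ε := by
  obtain ⟨K, hK1, hK, hKL⟩ := h.exists_measure_qball_mul_le (4 * A₀ ^ 2)
  refine ⟨K ^ ε, ENNReal.rpow_ne_top_of_nonneg hε0.le hK, fun c r x hx hcomp => ?_⟩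
  set V := radialVolume μ ρ x₀
  have hVy (y : X) (hy : y ∈ qball ρ c r) : (V y)⁻¹ ^ ε ≤ K ^ ε * (V x)⁻¹ ^ ε := by
    have hVxy : V x ≤ K * V y :=
      (measure_mono (qball_mono ρ x₀ (h.add_one_le_of_mem_qball_of_le hx hy (hcomp y hy)))).trans
        (hKL x₀ _ (by linarith [h.nonneg x₀ y]))
    rw [← ENNReal.mul_rpow_of_nonneg _ _ hε0.le]
    gcongr
    exact ENNReal.inv_le_mul_inv_of_le_mul (zero_lt_one.trans_le hK1).ne' hK hVxy
  calc ∫⁻ y in qball ρ c r, (V y)⁻¹ ^ ε ∂μ ≤ K ^ ε * (V x)⁻¹ ^ ε * μ (qball ρ c r) :=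
        setLIntegral_le_mul_measure hVy
    _ = K ^ ε * μ (qball ρ c r) * (V x)⁻¹ ^ ε := mul_right_comm _ _ _

theorem exists_setLIntegral_inv_radialVolume_rpow_le_of_lt (h : IsHomogeneousType μ ρ A₀ Cμ)
    (x₀ : X) {ε : ℝ} (hε0 : 0 < ε) (hε1 : ε < 1) :
    ∃ K : ℝ≥0∞, K ≠ ∞ ∧ ∀ c r, ∀ x ∈ qball ρ c r, ∀ y₁ ∈ qball ρ c r, ρ x₀ y₁ + 1 < r →
      ∫⁻ y in qball ρ c r, (radialVolume μ ρ x₀ y)⁻¹ ^ ε ∂μ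
        ≤ K * μ (qball ρ c r) * (radialVolume μ ρ x₀ x)⁻¹ ^ ε := by
  obtain ⟨K, -, hK, hKL⟩ := h.exists_measure_qball_le (6 * A₀ ^ 3)
  obtain ⟨C₀, hC₀, hcore⟩ := h.exists_setLIntegral_inv_radialVolume_rpow_le x₀ hε0 hε1
  refine ⟨C₀ * K, ENNReal.mul_ne_top hC₀ hK, fun c r x hx y₁ hy₁ hy₁r => ?_⟩
  set V := radialVolume μ ρ x₀
  set R := 4 * A₀ ^ 2 * r
  have hR1 : 1 ≤ R := by
    linarith [h.add_one_lt_of_mem_qball_of_lt hx hy₁ hy₁r, h.nonneg x₀ x]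
  have hR0 : (0 : ℝ) < R := zero_lt_one.trans_le hR1
  have hBR : qball ρ c r ⊆ qball ρ x₀ R := fun u hu => by
    have := h.add_one_lt_of_mem_qball_of_lt hu hy₁ hy₁r
    change ρ x₀ u < R
    linarith
  have hVx : V x ≤ μ (qball ρ x₀ R) :=
    measure_mono (qball_mono ρ x₀ (h.add_one_lt_of_mem_qball_of_lt hx hy₁ hy₁r).le)
  have hRB : μ (qball ρ x₀ R) ≤ K * μ (qball ρ c r) :=
    hKL x₀ R c r (h.pos_of_mem_qball hx).le (h.dist_add_le_of_mem_qball_of_lt hy₁ hy₁r)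
  calc ∫⁻ y in qball ρ c r, (V y)⁻¹ ^ ε ∂μ ≤ ∫⁻ y in qball ρ x₀ R, (V y)⁻¹ ^ ε ∂μ :=
        lintegral_mono_set hBR
    _ ≤ C₀ * μ (qball ρ x₀ R) ^ (1 - ε) := hcore R hR1
    _ = C₀ * μ (qball ρ x₀ R) * (μ (qball ρ x₀ R))⁻¹ ^ ε := by
      rw [ENNReal.inv_rpow, ← ENNReal.rpow_neg, mul_assoc, sub_eq_add_neg,
        ENNReal.rpow_add _ _ (h.measure_qball_ne_zero x₀ hR0) (h.measure_qball_ne_top x₀ hR0),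
        ENNReal.rpow_one]
    _ ≤ C₀ * (K * μ (qball ρ c r)) * (V x)⁻¹ ^ ε := by gcongr
    _ = C₀ * K * μ (qball ρ c r) * (V x)⁻¹ ^ ε := by rw [← mul_assoc]

theorem exists_a1With_inv_radialVolume_rpow (h : IsHomogeneousType μ ρ A₀ Cμ) (x₀ : X) {ε : ℝ}
    (hε0 : 0 < ε) (hε1 : ε < 1) :
    ∃ C : ℝ≥0∞, C ≠ ∞ ∧ A1With μ ρ C fun y => (radialVolume μ ρ x₀ y)⁻¹ ^ ε := by
  obtain ⟨K₁, hK₁, hfar⟩ := h.exists_setLIntegral_inv_radialVolume_rpow_le_of_forall_le x₀ hε0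
  obtain ⟨K₂, hK₂, hnear⟩ := h.exists_setLIntegral_inv_radialVolume_rpow_le_of_lt x₀ hε0 hε1
  refine ⟨K₁ + K₂, ENNReal.add_ne_top.2 ⟨hK₁, hK₂⟩, fun c r x hx => ?_⟩
  by_cases hcomp : ∀ y ∈ qball ρ c r, r ≤ ρ x₀ y + 1
  · exact (hfar c r x hx hcomp).trans (by gcongr; exact le_self_add)
  · push Not at hcomp
    obtain ⟨y₁, hy₁, hy₁r⟩ := hcomp
    exact (hnear c r x hx y₁ hy₁ hy₁r).trans (by gcongr; exact le_add_self)

theorem lintegral_indicator_qball_ne_top (h : IsHomogeneousType μ ρ A₀ Cμ) (x₀ : X) :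
    ∫⁻ u, (qball ρ x₀ 1).indicator (fun _ => (1 : ℝ≥0∞)) u ∂μ ≠ ∞ :=
  ((lintegral_indicator_one_le _).trans_lt (h.measure_qball_lt_top x₀ 1 one_pos)).ne

theorem inv_radialVolume_mul_le_hlMax_indicator (h : IsHomogeneousType μ ρ A₀ Cμ) (x₀ y : X) :
    (radialVolume μ ρ x₀ y)⁻¹ * ∫⁻ u, (qball ρ x₀ 1).indicator (fun _ => 1) u ∂μ
      ≤ hlMax ρ μ ((qball ρ x₀ 1).indicator fun _ => 1) y := by
  have hsub : qball ρ x₀ 1 ⊆ qball ρ x₀ (ρ x₀ y + 1) :=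
    qball_mono ρ x₀ (by linarith [h.nonneg x₀ y])
  rw [← setLIntegral_eq_of_support_subset (support_indicator_subset.trans hsub)]
  exact le_hlMax _ (show ρ x₀ y < ρ x₀ y + 1 by linarith)

theorem exists_inv_measure_mul_setLIntegral_le (h : IsHomogeneousType μ ρ A₀ Cμ) (x₀ : X) :
    ∃ K : ℝ≥0∞, K ≠ ∞ ∧ ∀ (f : X → ℝ≥0∞) z s, ∀ y ∈ qball ρ z s, ∀ w ∈ qball ρ z s,
      ρ x₀ w < 1 → 1 ≤ s → (μ (qball ρ z s))⁻¹ * ∫⁻ u in qball ρ z s, f u ∂μ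
        ≤ K * ((radialVolume μ ρ x₀ y)⁻¹ * ∫⁻ u, f u ∂μ) := by
  obtain ⟨K, hK1, hK, hKL⟩ := h.exists_measure_qball_le (6 * A₀ ^ 3)
  refine ⟨K, hK, fun f z s y hy w hw hw₀ hs => ?_⟩
  -- a ball of radius `≥ 1` through `y` meeting the unit ball engulfs `B(x₀, ρ x₀ y + 1)`
  have hV : radialVolume μ ρ x₀ y ≤ K * μ (qball ρ z s) :=
    hKL x₀ _ z s (by linarith) (h.dist_add_le_of_mem_qball_of_one_le hy hw hw₀ hs)
  calc (μ (qball ρ z s))⁻¹ * ∫⁻ u in qball ρ z s, f u ∂μ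
      ≤ (μ (qball ρ z s))⁻¹ * ∫⁻ u, f u ∂μ := by
        gcongr
        exact Measure.restrict_le_self
    _ ≤ K * (radialVolume μ ρ x₀ y)⁻¹ * ∫⁻ u, f u ∂μ := by
        gcongr
        exact ENNReal.inv_le_mul_inv_of_le_mul (zero_lt_one.trans_le hK1).ne' hK hV
    _ = K * ((radialVolume μ ρ x₀ y)⁻¹ * ∫⁻ u, f u ∂μ) := mul_assoc _ _ _

theorem exists_hlMax_indicator_le (h : IsHomogeneousType μ ρ A₀ Cμ) (x₀ : X)
    (ht : ∫⁻ u, (qball ρ x₀ 1).indicator (fun _ => (1 : ℝ≥0∞)) u ∂μ ≠ 0) :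
    ∃ K : ℝ≥0∞, K ≠ ∞ ∧ ∀ y, hlMax ρ μ ((qball ρ x₀ 1).indicator fun _ => 1) y
      ≤ K * ((radialVolume μ ρ x₀ y)⁻¹ * ∫⁻ u, (qball ρ x₀ 1).indicator (fun _ => 1) u ∂μ) := by
  set f : X → ℝ≥0∞ := (qball ρ x₀ 1).indicator fun _ => 1
  set t := ∫⁻ u, f u ∂μ
  set V := radialVolume μ ρ x₀
  have htop : t ≠ ∞ := h.lintegral_indicator_qball_ne_top x₀
  obtain ⟨K, hK, hlarge⟩ := h.exists_inv_measure_mul_setLIntegral_le x₀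
  set N := μ (qball ρ x₀ (4 * A₀ ^ 2))
  have hN : N ≠ ∞ := h.measure_qball_ne_top x₀ (by nlinarith [h.one_le_quasiTriangleConst])
  refine ⟨K + N / t, by finiteness, fun y => hlMax_le fun z s hy => ?_⟩
  by_cases hmeet : ∃ w ∈ qball ρ z s, ρ x₀ w < 1
  swap
  · push Not at hmeet
    have hzero : ∫⁻ u in qball ρ z s, f u ∂μ = 0 := le_zero_iff.1 <|
      (setLIntegral_le_mul_measure (c := 0) fun u hu => by simp [f, qball, hmeet u hu]).trans_eq
        (zero_mul _)
    rw [hzero, mul_zero]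
    exact zero_le
  obtain ⟨w, hw, hw₀⟩ := hmeet
  rcases le_or_gt 1 s with hs | hs
  · exact (hlarge f z s y hy w hw hw₀ hs).trans (by gcongr; exact le_self_add)
  -- a ball of radius `< 1` meeting the unit ball stays in `B(x₀, 4 A₀²)`, where `M f ≤ 1`
  have hV : V y ≤ N :=
    measure_mono (qball_mono ρ x₀ (h.add_one_le_of_mem_qball_of_lt_one hy hw hw₀ hs))
  calc (μ (qball ρ z s))⁻¹ * ∫⁻ u in qball ρ z s, f u ∂μ ≤ 1 :=
        inv_measure_mul_setLIntegral_le_one (indicator_le fun _ _ => le_rfl) _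
    _ = V y * (V y)⁻¹ :=
        (ENNReal.mul_inv_cancel (h.radialVolume_ne_zero x₀ y) (h.radialVolume_ne_top x₀ y)).symm
    _ ≤ N * (V y)⁻¹ := by gcongr
    _ = N / t * ((V y)⁻¹ * t) := by rw [mul_comm _ t, ← mul_assoc, ENNReal.div_mul_cancel ht htop]
    _ ≤ (K + N / t) * ((V y)⁻¹ * t) := by gcongr; exact le_add_self

theorem exists_a1With_hlMax_indicator_rpow (h : IsHomogeneousType μ ρ A₀ Cμ) (x₀ : X) {ε : ℝ}
    (hε0 : 0 < ε) (hε1 : ε < 1) :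
    ∃ C : ℝ≥0∞, C ≠ ∞ ∧
      A1With μ ρ C fun y => hlMax ρ μ ((qball ρ x₀ 1).indicator fun _ => 1) y ^ ε := by
  set f : X → ℝ≥0∞ := (qball ρ x₀ 1).indicator fun _ => 1
  set t := ∫⁻ u, f u ∂μ
  rcases eq_or_ne t 0 with ht | ht
  · have hM (y : X) : hlMax ρ μ f y = 0 := le_zero_iff.1 <| hlMax_le fun z s _ =>
      (by gcongr; exact setLIntegral_le_lintegral _ _ : _ ≤ _ * t).trans_eq (by rw [ht, mul_zero])
    refine ⟨0, ENNReal.zero_ne_top, fun c r x _ => ?_⟩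
    simp [hM, ENNReal.zero_rpow_of_pos hε0]
  have htop : t ≠ ∞ := h.lintegral_indicator_qball_ne_top x₀
  obtain ⟨C₀, hC₀, hA1⟩ := h.exists_a1With_inv_radialVolume_rpow x₀ hε0 hε1
  obtain ⟨K, hK, hMK⟩ := h.exists_hlMax_indicator_le x₀ ht
  have htε : t ^ ε ≠ ∞ := ENNReal.rpow_ne_top_of_nonneg hε0.le htop
  have hKε : K ^ ε ≠ ∞ := ENNReal.rpow_ne_top_of_nonneg hε0.le hK
  have htε0 : t ^ ε ≠ 0 := (ENNReal.rpow_pos (pos_iff_ne_zero.2 ht) htop).ne'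
  refine ⟨_, by finiteness,
    hA1.of_le_of_le htε0 htε (ENNReal.mul_ne_top hKε htε) (fun y => ?_) fun y => ?_⟩
  · rw [← ENNReal.mul_rpow_of_nonneg _ _ hε0.le, mul_comm]
    gcongr
    exact h.inv_radialVolume_mul_le_hlMax_indicator x₀ y
  · calc hlMax ρ μ f y ^ ε ≤ (K * ((radialVolume μ ρ x₀ y)⁻¹ * t)) ^ ε := by gcongr; exact hMK y
      _ = K ^ ε * t ^ ε * (radialVolume μ ρ x₀ y)⁻¹ ^ ε := by
        rw [ENNReal.mul_rpow_of_nonneg _ _ hε0.le, ENNReal.mul_rpow_of_nonneg _ _ hε0.le]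
        ring

end IsHomogeneousType

theorem stmt11_general {X : Type*} [MeasurableSpace X] (μ : Measure X) (ρ : X → X → ℝ)
    (A₀ : ℝ) (Cμ : ℝ≥0∞)
    (hA₀ : 1 ≤ A₀)
    (hρ_nonneg : ∀ x y, 0 ≤ ρ x y)
    (hρ_symm : ∀ x y, ρ x y = ρ y x)
    (hρ_tri : ∀ x y z, ρ x z ≤ A₀ * (ρ x y + ρ y z))
    (hCμ : 1 ≤ Cμ) (hCμ_lt : Cμ < ∞)
    (hdouble : ∀ (x : X) (r : ℝ), μ (qball ρ x (2 * r)) ≤ Cμ * μ (qball ρ x r))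
    (hpos : ∀ (x : X) (r : ℝ), 0 < r → 0 < μ (qball ρ x r))
    (hfin : ∀ (x : X) (r : ℝ), 0 < r → μ (qball ρ x r) < ∞)
    (x₀ : X) (ε : ℝ) (hε0 : 0 < ε) (hε1 : ε < 1) :
    ∃ C : ℝ≥0∞, 0 < C ∧ C < ∞ ∧ ∀ (c : X) (r : ℝ), 0 < r →
      ∀ᵐ x ∂μ, x ∈ qball ρ c r →
        (μ (qball ρ c r))⁻¹ *
            (∫⁻ y in qball ρ c r,
              (hlMax ρ μ (Set.indicator (qball ρ x₀ 1) fun _ => (1 : ℝ≥0∞)) y) ^ ε ∂μ)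
          ≤ C * (hlMax ρ μ (Set.indicator (qball ρ x₀ 1) fun _ => (1 : ℝ≥0∞)) x) ^ ε := by
  have h : IsHomogeneousType μ ρ A₀ Cμ :=
    ⟨hA₀, hρ_nonneg, hρ_symm, hρ_tri, hCμ, hCμ_lt.ne, hdouble, hpos, hfin⟩
  obtain ⟨C, hC, hA1⟩ := h.exists_a1With_hlMax_indicator_rpow x₀ hε0 hε1
  refine ⟨C + 1, by positivity, ENNReal.add_lt_top.2 ⟨hC.lt_top, ENNReal.one_lt_top⟩,
    fun c r hr => ae_of_all μ fun x hx => ?_⟩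
  exact (hA1.mono le_self_add).inv_measure_mul_setLIntegral_le hx
    (h.measure_qball_ne_zero c hr) (h.measure_qball_ne_top c hr)

/-- On a space of homogeneous type, for `x₀ ∈ X` and `ε ∈ (0,1)`, the weight
`w := [M(𝟏_{B(x₀,1)})]^ε` is a Muckenhoupt `A₁` weight: there is `C > 0` with
`μ(B)⁻¹ ∫_B w dμ ≤ C w(x)` for every ball `B` and a.e. `x ∈ B`. -/
theorem stmt11 {X : Type*} [MeasurableSpace X] (μ : Measure X) (ρ : X → X → ℝ)
    (A₀ : ℝ) (Cμ : ℝ≥0∞)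
    (hA₀ : 1 ≤ A₀)
    (hρ_nonneg : ∀ x y, 0 ≤ ρ x y)
    (hρ_eq : ∀ x y, ρ x y = 0 ↔ x = y)
    (hρ_symm : ∀ x y, ρ x y = ρ y x)
    (hρ_tri : ∀ x y z, ρ x z ≤ A₀ * (ρ x y + ρ y z))
    (hCμ : 1 ≤ Cμ) (hCμ_lt : Cμ < ∞)
    (hdouble : ∀ (x : X) (r : ℝ), μ (qball ρ x (2 * r)) ≤ Cμ * μ (qball ρ x r))
    (hpos : ∀ (x : X) (r : ℝ), 0 < r → 0 < μ (qball ρ x r))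
    (hfin : ∀ (x : X) (r : ℝ), 0 < r → μ (qball ρ x r) < ∞)
    (x₀ : X) (ε : ℝ) (hε0 : 0 < ε) (hε1 : ε < 1) :
    ∃ C : ℝ≥0∞, 0 < C ∧ C < ∞ ∧ ∀ (c : X) (r : ℝ), 0 < r →
      ∀ᵐ x ∂μ, x ∈ qball ρ c r →
        (μ (qball ρ c r))⁻¹ *
            (∫⁻ y in qball ρ c r,
              (hlMax ρ μ (Set.indicator (qball ρ x₀ 1) fun _ => (1 : ℝ≥0∞)) y) ^ ε ∂μ)
          ≤ C * (hlMax ρ μ (Set.indicator (qball ρ x₀ 1) fun _ => (1 : ℝ≥0∞)) x) ^ ε :=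
  stmt11_general μ ρ A₀ Cμ hA₀ hρ_nonneg hρ_symm hρ_tri hCμ hCμ_lt hdouble hpos hfin x₀ ε hε0 hε1
end
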